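/- arXiv:2009.10935 — 2 statements merged into one kernel-verified Lean document; each statement's English description precedes it below -/
import Mathlib

section
/- With the notation above, the function λ₀ satisfies λ₀'' + (2m+1) tan φ · λ₀' + (2(m+1) + (2m+1) sec² φ) λ₀ = Λ sec² φ + ulΛ on (-π/2, π/2). -/
open Real

/-- The sequence `a₀ = 1`, `a_j = ((2m - 2j + 4)/(2m - 2j + 1)) a_{j-1}`. -/
noncomputable def aSeq (m : ℕ) : ℕ → ℝ
  | 0 => 1
  | j + 1 => ((2 * (m : ℝ) - 2 * ((j : ℝ) + 1) + 4) / (2 * (m : ℝ) - 2 * ((j : ℝ) + 1) + 1))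
      * aSeq m j

/-- `λ₀(φ) = ulΛ/(2m+2) + (Λ/(2m+1) − ulΛ/(2m+2))(Σ_{j=0}^m a_j cos^{2j}φ − 2 a_m cos^{2m+2}φ)
  + c cos^{2m+1}φ sin φ`. -/
noncomputable def lam0 (m : ℕ) (Λ ulΛ c : ℝ) (φ : ℝ) : ℝ :=
  ulΛ / (2 * (m : ℝ) + 2)
    + (Λ / (2 * (m : ℝ) + 1) - ulΛ / (2 * (m : ℝ) + 2)) *
        ((∑ j ∈ Finset.range (m + 1), aSeq m j * Real.cos φ ^ (2 * j))
          - 2 * aSeq m m * Real.cos φ ^ (2 * m + 2))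
    + c * Real.cos φ ^ (2 * m + 1) * Real.sin φ

/-!
`λ₀` is a constant plus multiples of `P = Σ_{j ≤ m} a_j cos^{2j} φ − 2 a_m cos^{2m+2} φ` and of
`cos^{2m+1} φ sin φ`, and the operator `L f = f'' + (2m+1) tan φ f' + (2(m+1) + (2m+1) sec² φ) f`
is linear. The function `cos^{2m+1} φ sin φ` solves `L f = 0`, `L 1 = 2m+2 + (2m+1) sec² φ`, and
`L cos^{n+2} = (n+1)(n+1-2m) cos^n + (2m-n)(n+3) cos^{n+2}`. The recursion
`(2m-2j-1) a_{j+1} = (2m-2j+2) a_j` makes the contributions of the monomials of `P` telescope,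
leaving `L P = (2m+1) sec² φ`.
-/

noncomputable def odeOp (m : ℕ) (f : ℝ → ℝ) (φ : ℝ) : ℝ :=
  deriv (deriv f) φ + (2 * (m : ℝ) + 1) * tan φ * deriv f φ
    + (2 * ((m : ℝ) + 1) + (2 * (m : ℝ) + 1) * (1 / cos φ) ^ 2) * f φ

section odeOp

variable (m : ℕ) {f g : ℝ → ℝ} (φ : ℝ)

lemma odeOp_const (a : ℝ) :
    odeOp m (fun _ => a) φ = (2 * ((m : ℝ) + 1) + (2 * (m : ℝ) + 1) * (1 / cos φ) ^ 2) * a := by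
  simp [odeOp]

lemma odeOp_const_mul (a : ℝ) :
    odeOp m (fun x => a * f x) φ = a * odeOp m f φ := by
  have h : deriv (fun x => a * f x) = fun x => a * deriv f x :=
    funext fun x => deriv_const_mul_field a
  simp only [odeOp, h, deriv_const_mul_field]
  ring

lemma odeOp_add (hf : ContDiff ℝ 2 f) (hg : ContDiff ℝ 2 g) :
    odeOp m (fun x => f x + g x) φ = odeOp m f φ + odeOp m g φ := by
  have h₁ : deriv (fun x => f x + g x) = fun x => deriv f x + deriv g x :=
    funext fun x => deriv_add (hf.differentiable two_ne_zero x) (hg.differentiable two_ne_zero x)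
  have h₂ := deriv_fun_add (hf.deriv'.differentiable one_ne_zero φ)
    (hg.deriv'.differentiable one_ne_zero φ)
  simp only [odeOp, h₁, h₂]
  ring

lemma odeOp_sub (hf : ContDiff ℝ 2 f) (hg : ContDiff ℝ 2 g) :
    odeOp m (fun x => f x - g x) φ = odeOp m f φ - odeOp m g φ := by
  have h₁ : deriv (fun x => f x - g x) = fun x => deriv f x - deriv g x :=
    funext fun x => deriv_sub (hf.differentiable two_ne_zero x) (hg.differentiable two_ne_zero x)
  have h₂ := deriv_fun_sub (hf.deriv'.differentiable one_ne_zero φ)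
    (hg.deriv'.differentiable one_ne_zero φ)
  simp only [odeOp, h₁, h₂]
  ring

lemma odeOp_sum {ι : Type*} (s : Finset ι) {f : ι → ℝ → ℝ} (hf : ∀ i ∈ s, ContDiff ℝ 2 (f i)) :
    odeOp m (fun x => ∑ i ∈ s, f i x) φ = ∑ i ∈ s, odeOp m (f i) φ := by
  have h₁ : deriv (fun x => ∑ i ∈ s, f i x) = fun x => ∑ i ∈ s, deriv (f i) x :=
    funext fun x => deriv_fun_sum fun i hi => (hf i hi).differentiable two_ne_zero x
  have h₂ : deriv (fun x => ∑ i ∈ s, deriv (f i) x) φ = ∑ i ∈ s, deriv (deriv (f i)) φ :=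
    deriv_fun_sum fun i hi => (hf i hi).deriv'.differentiable one_ne_zero φ
  simp only [odeOp, h₁, h₂, Finset.sum_add_distrib, Finset.mul_sum]

lemma odeOp_eq_of_hasDerivAt {f' : ℝ → ℝ} {f'' : ℝ} (hf : ∀ x, HasDerivAt f (f' x) x)
    (hf' : HasDerivAt f' f'' φ) :
    odeOp m f φ = f'' + (2 * (m : ℝ) + 1) * tan φ * f' φ
      + (2 * ((m : ℝ) + 1) + (2 * (m : ℝ) + 1) * (1 / cos φ) ^ 2) * f φ := by
  rw [odeOp, funext fun x => (hf x).deriv, hf'.deriv]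

lemma odeOp_cos_pow_add_two (n : ℕ) (hφ : cos φ ≠ 0) :
    odeOp m (fun x => cos x ^ (n + 2)) φ
      = (n + 1) * (n + 1 - 2 * m) * cos φ ^ n + (2 * m - n) * (n + 3) * cos φ ^ (n + 2) := by
  have hf : ∀ x, HasDerivAt (fun x => cos x ^ (n + 2))
      (-((n + 2) * (cos x ^ (n + 1) * sin x))) x :=
    fun x => ((hasDerivAt_cos x).pow (n + 2)).congr_deriv (by push_cast; ring)
  have hf' : HasDerivAt (fun x => -((n + 2) * (cos x ^ (n + 1) * sin x)))
      (-((n + 2) * ((n + 1) * cos φ ^ n * (-sin φ) * sin φ + cos φ ^ (n + 1) * cos φ))) φ :=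
    ((((hasDerivAt_cos φ).fun_pow (n + 1)).mul (hasDerivAt_sin φ)).const_mul ((n : ℝ) + 2)).fun_neg
      |>.congr_deriv (by push_cast [Nat.add_sub_cancel]; ring)
  rw [odeOp_eq_of_hasDerivAt m φ hf hf', tan_eq_sin_div_cos]
  field_simp
  linear_combination (n + 2 : ℝ) * (n - 2 * m) * cos φ ^ (n + 2) * sin_sq_add_cos_sq φ

lemma odeOp_cos_pow_mul_sin (hφ : cos φ ≠ 0) :
    odeOp m (fun x => cos x ^ (2 * m + 1) * sin x) φ = 0 := by
  have hf : ∀ x, HasDerivAt (fun x => cos x ^ (2 * m + 1) * sin x)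
      (cos x ^ (2 * m + 1) * cos x - (2 * m + 1) * (cos x ^ (2 * m) * sin x ^ 2)) x :=
    fun x => (((hasDerivAt_cos x).fun_pow _).mul (hasDerivAt_sin x)).congr_deriv
      (by push_cast [Nat.add_sub_cancel]; ring)
  have hf' : HasDerivAt
      (fun x => cos x ^ (2 * m + 1) * cos x - (2 * m + 1) * (cos x ^ (2 * m) * sin x ^ 2))
      ((2 * m + 1) * cos φ ^ (2 * m) * (-sin φ) * cos φ + cos φ ^ (2 * m + 1) * (-sin φ)
        - (2 * m + 1) * ((2 * m) * cos φ ^ (2 * m - 1) * (-sin φ) * sin φ ^ 2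
          + cos φ ^ (2 * m) * (2 * sin φ * cos φ))) φ :=
    ((((hasDerivAt_cos φ).fun_pow (2 * m + 1)).mul (hasDerivAt_cos φ)).sub
      ((((hasDerivAt_cos φ).fun_pow (2 * m)).mul ((hasDerivAt_sin φ).fun_pow 2)).const_mul
        (2 * (m : ℝ) + 1))).congr_deriv (by push_cast [Nat.add_sub_cancel]; ring)
  have hpow : (2 * m : ℝ) * cos φ ^ (2 * m - 1) * cos φ = 2 * m * cos φ ^ (2 * m) := by
    rcases m.eq_zero_or_pos with rfl | hm
    · simp
    · rw [mul_assoc, pow_sub_one_mul (by omega)]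
  rw [odeOp_eq_of_hasDerivAt m φ hf hf', tan_eq_sin_div_cos]
  field_simp
  linear_combination (2 * m + 1 : ℝ) * sin φ ^ 3 * cos φ * hpow
    - (2 * m + 1 : ℝ) * sin φ * cos φ * cos φ ^ (2 * m) * sin_sq_add_cos_sq φ

end odeOp

lemma aSeq_succ_mul (m j : ℕ) :
    (2 * m - 2 * j - 1 : ℝ) * aSeq m (j + 1) = (2 * m - 2 * j + 2) * aSeq m j := by
  have hodd : (2 * m - 2 * j - 1 : ℝ) ≠ 0 := by
    have : (2 * m - 2 * j - 1 : ℤ) ≠ 0 := by omega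
    exact_mod_cast this
  rw [aSeq, show (2 * m - 2 * (j + 1) + 1 : ℝ) = 2 * m - 2 * j - 1 by ring, ← mul_assoc,
    mul_div_cancel₀ _ hodd]
  ring

lemma sum_range_aSeq_telescope (m : ℕ) (x : ℝ) :
    ∑ j ∈ Finset.range m, aSeq m (j + 1) * ((2 * j + 1) * (2 * j + 1 - 2 * m) * x ^ (2 * j)
      + (2 * m - 2 * j) * (2 * j + 3) * x ^ (2 * j + 2))
    = 2 * (2 * m + 1) * aSeq m m * x ^ (2 * m) - (2 * m + 2) := by
  let g : ℕ → ℝ := fun j => (2 * m + 2 - 2 * j) * (2 * j + 1) * aSeq m j * x ^ (2 * j)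
  have hg : ∀ j, aSeq m (j + 1) * ((2 * j + 1) * (2 * j + 1 - 2 * m) * x ^ (2 * j)
      + (2 * m - 2 * j) * (2 * j + 3) * x ^ (2 * j + 2)) = g (j + 1) - g j := by
    intro j
    simp only [g]
    push_cast
    rw [mul_add 2 j 1, mul_one]
    linear_combination (-(2 * j + 1 : ℝ) * x ^ (2 * j)) * aSeq_succ_mul m j
  rw [Finset.sum_congr rfl fun j _ => hg j, Finset.sum_range_sub]
  simp only [g, aSeq]
  push_cast
  ring

noncomputable def cosPoly (m : ℕ) (φ : ℝ) : ℝ :=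
  (∑ j ∈ Finset.range (m + 1), aSeq m j * cos φ ^ (2 * j)) - 2 * aSeq m m * cos φ ^ (2 * m + 2)

@[fun_prop]
lemma contDiff_cosPoly (m : ℕ) : ContDiff ℝ 2 (cosPoly m) := by
  unfold cosPoly
  fun_prop

lemma odeOp_cosPoly (m : ℕ) {φ : ℝ} (hφ : cos φ ≠ 0) :
    odeOp m (cosPoly m) φ = (2 * m + 1) * (1 / cos φ) ^ 2 := by
  change odeOp m (fun x => (∑ j ∈ Finset.range (m + 1), aSeq m j * cos x ^ (2 * j))
    - 2 * aSeq m m * cos x ^ (2 * m + 2)) φ = _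
  rw [odeOp_sub _ _ (by fun_prop) (by fun_prop), odeOp_sum _ _ _ fun j _ => by fun_prop,
    odeOp_const_mul]
  simp_rw [odeOp_const_mul]
  rw [Finset.sum_range_succ']
  simp only [show ∀ j : ℕ, 2 * (j + 1) = 2 * j + 2 from fun j => rfl, mul_zero, pow_zero,
    odeOp_const, odeOp_cos_pow_add_two m φ _ hφ]
  have htel := sum_range_aSeq_telescope m (cos φ)
  push_cast at htel ⊢
  rw [htel, show aSeq m 0 = 1 from rfl]
  ring

theorem stmt9_general (m : ℕ) (Λ ulΛ c : ℝ) :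
    ∀ φ ∈ Set.Ioo (-(π / 2)) (π / 2),
      deriv (deriv (lam0 m Λ ulΛ c)) φ
        + (2 * (m : ℝ) + 1) * Real.tan φ * deriv (lam0 m Λ ulΛ c) φ
        + (2 * ((m : ℝ) + 1) + (2 * (m : ℝ) + 1) * (1 / Real.cos φ) ^ 2) * lam0 m Λ ulΛ c φ
        = Λ * (1 / Real.cos φ) ^ 2 + ulΛ := by
  intro φ hφ
  have hcos : cos φ ≠ 0 := (cos_pos_of_mem_Ioo hφ).ne'
  have hlam : lam0 m Λ ulΛ c = fun x => ulΛ / (2 * m + 2)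
      + ((Λ / (2 * m + 1) - ulΛ / (2 * m + 2)) * cosPoly m x
        + c * (cos x ^ (2 * m + 1) * sin x)) := by
    funext x
    simp only [lam0, cosPoly]
    ring
  change odeOp m (lam0 m Λ ulΛ c) φ = _
  rw [hlam, odeOp_add _ _ (by fun_prop) (by fun_prop),
    odeOp_add _ _ (by fun_prop) (by fun_prop), odeOp_const, odeOp_const_mul,
    odeOp_const_mul, odeOp_cosPoly m hcos, odeOp_cos_pow_mul_sin m φ hcos]
  field_simp
  ring

/-- `λ₀` satisfies
`λ₀'' + (2m+1) tan φ λ₀' + (2(m+1) + (2m+1) sec²φ) λ₀ = Λ sec²φ + ulΛ` on `(-π/2, π/2)`. -/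
theorem stmt9 (m : ℕ) (hm : 2 ≤ m) (Λ ulΛ c : ℝ) :
    ∀ φ ∈ Set.Ioo (-(π / 2)) (π / 2),
      deriv (deriv (lam0 m Λ ulΛ c)) φ
        + (2 * (m : ℝ) + 1) * Real.tan φ * deriv (lam0 m Λ ulΛ c) φ
        + (2 * ((m : ℝ) + 1) + (2 * (m : ℝ) + 1) * (1 / Real.cos φ) ^ 2) * lam0 m Λ ulΛ c φ
        = Λ * (1 / Real.cos φ) ^ 2 + ulΛ :=
  stmt9_general m Λ ulΛ c
end

section
/- The function λ₀ of Theorem 1.2 is identically zero on (-π/2, π/2) if and only if Λ = ulΛ = c = 0. -/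
open Real

/-!
The term `c cos^{2m+1} φ sin φ` is the odd part of `λ₀`, so `λ₀ ≡ 0` forces it to vanish, and
evaluating at `π/4` gives `c = 0`. The even part is `A + K Q(cos² φ)`, where `A = ulΛ/(2m+2)`,
`K = Λ/(2m+1) − A` and `Q = Σ_{j ≤ m} a_j X^j − 2 a_m X^{m+1}`. As `cos² φ` sweeps out `(0, 1)`,
the polynomial `A + K Q` has infinitely many roots and so is zero; its coefficient `−2 K a_m` of
`X^{m+1}` gives `K = 0` since `a_m > 0`, whence `A = 0`.
-/

open Polynomial

lemma aSeq_pos {m j : ℕ} (hj : j ≤ m) : 0 < aSeq m j := by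
  induction j with
  | zero => simp [aSeq]
  | succ j ih =>
    have hjm : (j : ℝ) + 1 ≤ m := by exact_mod_cast hj
    exact mul_pos (div_pos (by linarith) (by linarith)) (ih (by omega))

noncomputable def aPoly (m : ℕ) : ℝ[X] :=
  ∑ j ∈ Finset.range (m + 1), C (aSeq m j) * X ^ j - C (2 * aSeq m m) * X ^ (m + 1)

lemma aPoly_coeff_succ (m : ℕ) : (aPoly m).coeff (m + 1) = -(2 * aSeq m m) := by
  rw [aPoly, coeff_sub, coeff_C_mul_X_pow, finsetSum_coeff]
  simp

lemma lam0_eq (m : ℕ) (Λ ulΛ c φ : ℝ) :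
    lam0 m Λ ulΛ c φ = ulΛ / (2 * (m : ℝ) + 2)
      + (Λ / (2 * (m : ℝ) + 1) - ulΛ / (2 * (m : ℝ) + 2)) * (aPoly m).eval (cos φ ^ 2)
      + c * cos φ ^ (2 * m + 1) * sin φ := by
  simp only [lam0, aPoly, eval_sub, eval_finsetSum, eval_mul, eval_C, eval_pow, eval_X, ← pow_mul,
    mul_add, mul_one]

lemma lam0_sub_lam0_neg (m : ℕ) (Λ ulΛ c φ : ℝ) :
    lam0 m Λ ulΛ c φ - lam0 m Λ ulΛ c (-φ) = 2 * (c * cos φ ^ (2 * m + 1) * sin φ) := by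
  rw [lam0_eq, lam0_eq, cos_neg, sin_neg]
  ring

lemma lam0_add_lam0_neg (m : ℕ) (Λ ulΛ c φ : ℝ) :
    lam0 m Λ ulΛ c φ + lam0 m Λ ulΛ c (-φ) = 2 * (ulΛ / (2 * (m : ℝ) + 2)
      + (Λ / (2 * (m : ℝ) + 1) - ulΛ / (2 * (m : ℝ) + 2)) * (aPoly m).eval (cos φ ^ 2)) := by
  rw [lam0_eq, lam0_eq, cos_neg, sin_neg]
  ring

lemma exists_cos_sq_eq {t : ℝ} (ht : t ∈ Set.Ioo 0 1) :
    ∃ φ ∈ Set.Ioo 0 (π / 2), cos φ ^ 2 = t := by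
  have hs : 0 < √t := sqrt_pos.mpr ht.1
  have hs1 : √t < 1 := (sqrt_lt' one_pos).mpr (by simpa using ht.2)
  refine ⟨arccos √t, ⟨arccos_pos.mpr hs1, arccos_lt_pi_div_two.mpr hs⟩, ?_⟩
  rw [cos_arccos (by linarith) hs1.le, sq_sqrt ht.1.le]

lemma eq_zero_of_affine_eval_eq_zero {R : Type*} [CommRing R] [IsDomain R] {q : R[X]} {n : ℕ}
    (hn : n ≠ 0) (hqn : q.coeff n ≠ 0) {s : Set R} (hs : s.Infinite)
    {A K : R} (h : ∀ t ∈ s, A + K * q.eval t = 0) : A = 0 ∧ K = 0 := by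
  have hp : C A + C K * q = 0 :=
    eq_zero_of_infinite_isRoot _ (hs.mono fun t ht => by simpa using h t ht)
  have hK : K = 0 := by
    simpa [coeff_C, hn, hqn] using congrArg (coeff · n) hp
  refine ⟨?_, hK⟩
  simpa [hK] using congrArg (coeff · 0) hp

theorem stmt12_general (m : ℕ) (Λ ulΛ c : ℝ) :
    (∀ φ ∈ Set.Ioo (-(π / 2)) (π / 2), lam0 m Λ ulΛ c φ = 0)
      ↔ (Λ = 0 ∧ ulΛ = 0 ∧ c = 0) := by
  refine ⟨fun h => ?_, by rintro ⟨rfl, rfl, rfl⟩ φ -; simp [lam0]⟩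
  have h_sym : ∀ φ ∈ Set.Ioo 0 (π / 2), lam0 m Λ ulΛ c φ = 0 ∧ lam0 m Λ ulΛ c (-φ) = 0 :=
    fun φ ⟨h0, h1⟩ => ⟨h φ ⟨by linarith, h1⟩, h (-φ) ⟨by linarith, by linarith⟩⟩
  have hc : c = 0 := by
    have hφ : π / 4 ∈ Set.Ioo 0 (π / 2) := ⟨by positivity, by linarith [pi_pos]⟩
    have := lam0_sub_lam0_neg m Λ ulΛ c (π / 4)
    rw [(h_sym _ hφ).1, (h_sym _ hφ).2, cos_pi_div_four, sin_pi_div_four] at this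
    simpa using this.symm
  have hm2 : (0 : ℝ) < 2 * m + 2 := by positivity
  have hm1 : (0 : ℝ) < 2 * m + 1 := by positivity
  obtain ⟨hA, hK⟩ := eq_zero_of_affine_eval_eq_zero (A := ulΛ / (2 * (m : ℝ) + 2))
    (K := Λ / (2 * (m : ℝ) + 1) - ulΛ / (2 * (m : ℝ) + 2)) m.succ_ne_zero
    (by rw [aPoly_coeff_succ]; linarith [aSeq_pos (le_refl m)]) (Set.Ioo_infinite one_pos)
    fun t ht => by
      obtain ⟨φ, hφ, rfl⟩ := exists_cos_sq_eq ht
      have := lam0_add_lam0_neg m Λ ulΛ c φ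
      rw [(h_sym φ hφ).1, (h_sym φ hφ).2] at this
      linarith
  have hul : ulΛ = 0 := by simpa [hm2.ne'] using hA
  have hΛ : Λ = 0 := by simpa [hul, hm1.ne'] using hK
  exact ⟨hΛ, hul, hc⟩

/-- `λ₀` vanishes identically on `(-π/2, π/2)` iff `Λ = ulΛ = c = 0`. -/
theorem stmt12 (m : ℕ) (hm : 2 ≤ m) (Λ ulΛ c : ℝ) :
    (∀ φ ∈ Set.Ioo (-(π / 2)) (π / 2), lam0 m Λ ulΛ c φ = 0)
      ↔ (Λ = 0 ∧ ulΛ = 0 ∧ c = 0) :=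
  stmt12_general m Λ ulΛ c
end
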